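/- arXiv:math/9909156 — 5 statements merged into one kernel-verified Lean document; each statement's English description precedes it below -/
import Mathlib

section
/- Let u ∈ M_n(ℂ) ⊗ M_k(ℂ) be unitary and let σ : M_n(ℂ) ⊗ M_k(ℂ) → M_k(ℂ) ⊗ M_n(ℂ) be the flip. Define Φ(x) = σ(u)* σ(x) σ(u). Then Φ is a trace-preserving *-algebra isomorphism from M_n(ℂ) ⊗ M_k(ℂ) onto M_k(ℂ) ⊗ M_n(ℂ) which satisfies Φ(1 ⊗ z) = σ(u)*(z ⊗ 1)σ(u) for every z ∈ M_k(ℂ) and Φ(u(y ⊗ 1)u*) = 1 ⊗ y for every y ∈ M_n(ℂ). In particular Φ maps the subalgebra ℂ ⊗ M_k(ℂ) onto σ(u)*(M_k(ℂ) ⊗ ℂ)σ(u) and the subalgebra u(M_n(ℂ) ⊗ ℂ)u* onto ℂ ⊗ M_n(ℂ); this is the canonical isomorphism realizing the dual of the vertex model of u as the vertex model of σ(u)*. -/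
open Matrix

def flipT {α β : Type*} (x : Matrix (α × β) (α × β) ℂ) : Matrix (β × α) (β × α) ℂ :=
  fun p q => x (p.2, p.1) (q.2, q.1)

noncomputable def tensorOne {α β : Type*} [DecidableEq β] (y : Matrix α α ℂ) :
    Matrix (α × β) (α × β) ℂ :=
  fun p q => y p.1 q.1 * (if p.2 = q.2 then 1 else 0)

noncomputable def oneTensor {α β : Type*} [DecidableEq α] (z : Matrix β β ℂ) :
    Matrix (α × β) (α × β) ℂ :=
  fun p q => (if p.1 = q.1 then 1 else 0) * z p.2 q.2

lemma flipT_eq {α β : Type*} (x : Matrix (α × β) (α × β) ℂ) :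
    flipT x = x.submatrix (Equiv.prodComm β α) (Equiv.prodComm β α) := rfl

lemma flipT_mul {α β : Type*} [Fintype α] [Fintype β]
    (x y : Matrix (α × β) (α × β) ℂ) : flipT (x * y) = flipT x * flipT y := by
  rw [flipT_eq, flipT_eq, flipT_eq]
  exact (Matrix.submatrix_mul_equiv x y _ (Equiv.prodComm β α) _).symm

lemma flipT_one {α β : Type*} [DecidableEq α] [DecidableEq β] :
    flipT (1 : Matrix (α × β) (α × β) ℂ) = 1 := by
  rw [flipT_eq]
  exact Matrix.submatrix_one_equiv (Equiv.prodComm β α)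

lemma flipT_conjT {α β : Type*} (x : Matrix (α × β) (α × β) ℂ) :
    flipT xᴴ = (flipT x)ᴴ := rfl

lemma flipT_flipT {α β : Type*} (x : Matrix (α × β) (α × β) ℂ) :
    flipT (flipT x) = x := rfl

lemma flipT_trace {α β : Type*} [Fintype α] [Fintype β]
    (x : Matrix (α × β) (α × β) ℂ) : (flipT x).trace = x.trace := by
  rw [flipT_eq, Matrix.trace, Matrix.trace]
  exact Fintype.sum_equiv (Equiv.prodComm β α) _ _ (fun p => rfl)

lemma flipT_oneTensor {α β : Type*} [DecidableEq α] (z : Matrix β β ℂ) :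
    flipT (oneTensor (α := α) z) = tensorOne z := by
  funext p q; simp [flipT, oneTensor, tensorOne, mul_comm]

lemma flipT_tensorOne {α β : Type*} [DecidableEq β] (y : Matrix α α ℂ) :
    flipT (tensorOne (β := β) y) = oneTensor y := by
  funext p q; simp [flipT, oneTensor, tensorOne, mul_comm]

/-- For a unitary `u ∈ M_n(ℂ) ⊗ M_k(ℂ)`, the map
`Φ(x) = σ(u)* σ(x) σ(u)` is a trace-preserving `*`-algebra isomorphism from
`M_n(ℂ) ⊗ M_k(ℂ)` onto `M_k(ℂ) ⊗ M_n(ℂ)` with `Φ(1 ⊗ z) = σ(u)*(z ⊗ 1)σ(u)` and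
`Φ(u(y ⊗ 1)u*) = 1 ⊗ y`. -/
theorem dual_vertex_model_isomorphism
    (n k : ℕ) (u : Matrix (Fin n × Fin k) (Fin n × Fin k) ℂ)
    (hu : u * uᴴ = 1 ∧ uᴴ * u = 1)
    (Φ : Matrix (Fin n × Fin k) (Fin n × Fin k) ℂ →
         Matrix (Fin k × Fin n) (Fin k × Fin n) ℂ)
    (hΦ : ∀ x, Φ x = (flipT u)ᴴ * flipT x * flipT u) :
    (∀ x y, Φ (x + y) = Φ x + Φ y) ∧
    (∀ (c : ℂ) x, Φ (c • x) = c • Φ x) ∧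
    Φ 1 = 1 ∧
    (∀ x y, Φ (x * y) = Φ x * Φ y) ∧
    (∀ x, Φ xᴴ = (Φ x)ᴴ) ∧
    Function.Bijective Φ ∧
    (∀ x, Matrix.trace (Φ x) = Matrix.trace x) ∧
    (∀ z : Matrix (Fin k) (Fin k) ℂ,
        Φ (oneTensor z) = (flipT u)ᴴ * tensorOne (β := Fin n) z * flipT u) ∧
    (∀ y : Matrix (Fin n) (Fin n) ℂ,
        Φ (u * tensorOne (β := Fin k) y * uᴴ) = oneTensor (α := Fin k) y) := by
  set v := flipT u with hv
  have hvv : v * vᴴ = 1 := by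
    rw [hv, ← flipT_conjT, ← flipT_mul, hu.1, flipT_one]
  have hvv' : vᴴ * v = 1 := by
    rw [hv, ← flipT_conjT, ← flipT_mul, hu.2, flipT_one]
  have hadd : ∀ x y, Φ (x + y) = Φ x + Φ y := by
    intro x y
    have : flipT (x + y) = flipT x + flipT y := rfl
    simp [hΦ, this, Matrix.mul_add, Matrix.add_mul]
  have hsmul : ∀ (c : ℂ) x, Φ (c • x) = c • Φ x := by
    intro c x
    have : flipT (c • x) = c • flipT x := rfl
    simp [hΦ, this, Matrix.mul_smul, Matrix.smul_mul]
  have hone : Φ 1 = 1 := by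
    rw [hΦ, flipT_one, Matrix.mul_one, hvv']
  have hmul : ∀ x y, Φ (x * y) = Φ x * Φ y := by
    intro x y
    rw [hΦ, hΦ, hΦ, flipT_mul]
    calc vᴴ * (flipT x * flipT y) * v
        = vᴴ * flipT x * (v * vᴴ) * flipT y * v := by rw [hvv]; noncomm_ring
      _ = vᴴ * flipT x * v * (vᴴ * flipT y * v) := by noncomm_ring
  have hstar : ∀ x, Φ xᴴ = (Φ x)ᴴ := by
    intro x
    rw [hΦ, hΦ, flipT_conjT]
    simp [Matrix.conjTranspose_mul, Matrix.mul_assoc]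
  have hbij : Function.Bijective Φ := by
    refine Function.bijective_iff_has_inverse.mpr ⟨fun y => flipT (v * y * vᴴ), ?_, ?_⟩
    · intro x
      rw [hΦ]
      have : v * (vᴴ * flipT x * v) * vᴴ = flipT x := by
        calc v * (vᴴ * flipT x * v) * vᴴ = (v * vᴴ) * flipT x * (v * vᴴ) := by noncomm_ring
          _ = flipT x := by rw [hvv]; simp
      show flipT (v * (vᴴ * flipT x * v) * vᴴ) = x
      rw [this, flipT_flipT]
    · intro y
      rw [hΦ, flipT_flipT]
      calc vᴴ * (v * y * vᴴ) * v = (vᴴ * v) * y * (vᴴ * v) := by noncomm_ring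
        _ = y := by rw [hvv']; simp
  have htr : ∀ x, Matrix.trace (Φ x) = Matrix.trace x := by
    intro x
    rw [hΦ, Matrix.trace_mul_cycle, hvv, Matrix.one_mul, flipT_trace]
  refine ⟨hadd, hsmul, hone, hmul, hstar, hbij, htr, ?_, ?_⟩
  · intro z; rw [hΦ, flipT_oneTensor]
  · intro y
    rw [hΦ, flipT_mul, flipT_mul, flipT_conjT, flipT_tensorOne]
    calc vᴴ * (v * oneTensor y * vᴴ) * v = (vᴴ * v) * oneTensor y * (vᴴ * v) := by noncomm_ring
      _ = oneTensor y := by rw [hvv']; simp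
end

section
/- Let u ∈ M_n(ℂ) ⊗ M_k(ℂ) be a biunitary. Then the linear span of the set of products { u(y ⊗ 1)u* · (1 ⊗ z) : y ∈ M_n(ℂ), z ∈ M_k(ℂ) } is all of M_n(ℂ) ⊗ M_k(ℂ). That is, the vertex-model commuting square associated to u is non-degenerate. -/
open Matrix

/-- The partial transpose `(t ⊗ id)u` in the first leg. -/
def pt {α β : Type*} (u : Matrix (α × β) (α × β) ℂ) : Matrix (α × β) (α × β) ℂ :=
  fun p q => u (q.1, p.2) (p.1, q.2)

/-- `u` is a biunitary: both `u` and its partial transpose `(t ⊗ id)u` are unitary. -/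
def IsBiunitary {α β : Type*} [Fintype α] [Fintype β] [DecidableEq α] [DecidableEq β]
    (u : Matrix (α × β) (α × β) ℂ) : Prop :=
  u * uᴴ = 1 ∧ uᴴ * u = 1 ∧ pt u * (pt u)ᴴ = 1 ∧ (pt u)ᴴ * pt u = 1

/-! The products `u (E_ij ⊗ 1) u* (1 ⊗ E_ab)`, combined with a coefficient matrix `C`, give
`u · pt((pt u)* · pt C)`. As `u u* = 1`, `(pt u)* pt u = 1` and `pt` is an involution, the choice
`C = pt (pt u · pt (u* x))` recovers an arbitrary matrix `x`. -/

@[simp]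
lemma pt_pt {α β : Type*} (w : Matrix (α × β) (α × β) ℂ) : pt (pt w) = w := rfl

section

variable {α β : Type*} [Fintype α] [Fintype β] [DecidableEq α] [DecidableEq β]

lemma mul_tensorOne_single_mul_conjTranspose_mul_oneTensor_single_apply
    (u : Matrix (α × β) (α × β) ℂ) (p q r s : α × β) :
    (u * tensorOne (single p.1 q.1 (1 : ℂ)) * uᴴ * oneTensor (single p.2 q.2 (1 : ℂ)) :
        Matrix (α × β) (α × β) ℂ) r s =
      if s.2 = q.2 then ∑ f, u r (p.1, f) * star (u (s.1, p.2) (q.1, f)) else 0 := by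
  simp only [Matrix.mul_apply, tensorOne, oneTensor, Matrix.single, conjTranspose_apply,
    Fintype.sum_prod_type, of_apply]
  simp [Finset.mul_sum, mul_comm, ite_and, Finset.sum_ite_eq, Finset.sum_ite_eq', eq_comm]

lemma sum_smul_mul_tensorOne_single_mul_conjTranspose_mul_oneTensor_single
    (u C : Matrix (α × β) (α × β) ℂ) :
    ∑ p, ∑ q, C p q • (u * tensorOne (single p.1 q.1 (1 : ℂ)) * uᴴ *
        oneTensor (single p.2 q.2 (1 : ℂ)) : Matrix (α × β) (α × β) ℂ) =
      u * pt ((pt u)ᴴ * pt C) := by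
  ext r s
  simp only [Matrix.sum_apply, Matrix.smul_apply, smul_eq_mul,
    mul_tensorOne_single_mul_conjTranspose_mul_oneTensor_single_apply]
  simp only [Matrix.mul_apply, pt, conjTranspose_apply, Fintype.sum_prod_type, mul_ite, mul_zero,
    Finset.sum_ite_eq, Finset.mem_univ, if_true, Finset.mul_sum]
  refine Finset.sum_congr rfl fun i _ => ?_
  rw [Finset.sum_comm]
  refine (Finset.sum_congr rfl fun j _ => Finset.sum_comm).trans ?_
  rw [Finset.sum_comm]
  refine Finset.sum_congr rfl fun f _ => Finset.sum_congr rfl fun j _ =>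
    Finset.sum_congr rfl fun a _ => by ring

lemma span_mul_tensorOne_mul_conjTranspose_mul_oneTensor_eq_top
    {u : Matrix (α × β) (α × β) ℂ} (hu : u * uᴴ = 1) (hpt : (pt u)ᴴ * pt u = 1) :
    Submodule.span ℂ {x : Matrix (α × β) (α × β) ℂ | ∃ (y : Matrix α α ℂ) (z : Matrix β β ℂ),
      x = u * tensorOne y * uᴴ * oneTensor z} = ⊤ := by
  refine eq_top_iff.2 fun x _ => ?_
  have hx : x = ∑ p, ∑ q, pt (pt u * pt (uᴴ * x)) p q •
      (u * tensorOne (single p.1 q.1 (1 : ℂ)) * uᴴ * oneTensor (single p.2 q.2 (1 : ℂ))) := by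
    rw [sum_smul_mul_tensorOne_single_mul_conjTranspose_mul_oneTensor_single, pt_pt,
      ← Matrix.mul_assoc, hpt, Matrix.one_mul, pt_pt, ← Matrix.mul_assoc, hu, Matrix.one_mul]
  rw [hx]
  exact Submodule.sum_mem _ fun p _ => Submodule.sum_mem _ fun q _ =>
    Submodule.smul_mem _ _ (Submodule.subset_span ⟨_, _, rfl⟩)

end

/-- For a biunitary `u ∈ M_n(ℂ) ⊗ M_k(ℂ)`, the linear span of the
products `u(y ⊗ 1)u* · (1 ⊗ z)` is all of `M_n(ℂ) ⊗ M_k(ℂ)`: the vertex-model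
commuting square of `u` is non-degenerate. -/
theorem vertex_model_nondegenerate
    (n k : ℕ) (u : Matrix (Fin n × Fin k) (Fin n × Fin k) ℂ)
    (hu : IsBiunitary u) :
    Submodule.span ℂ
      {x : Matrix (Fin n × Fin k) (Fin n × Fin k) ℂ |
        ∃ (y : Matrix (Fin n) (Fin n) ℂ) (z : Matrix (Fin k) (Fin k) ℂ),
          x = u * tensorOne (β := Fin k) y * uᴴ * oneTensor (α := Fin n) z} = ⊤ :=
  span_mul_tensorOne_mul_conjTranspose_mul_oneTensor_eq_top hu.1 hu.2.2.2
end

section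
/- Let w ∈ M_n(ℂ) be a complex Hadamard matrix, i.e. a unitary all of whose entries have modulus n^{-1/2}. Then the linear span of the set of products { w d w* d' : d, d' ∈ Δ } is all of M_n(ℂ), where Δ ⊂ M_n(ℂ) is the algebra of diagonal matrices. That is, the spin-model commuting square associated to w is non-degenerate. -/
/-!
Right multiplication by the diagonal matrix unit `e_ll` keeps only column `l`, and column `l` of
`w diag(d) wᴴ` is column `i` of `w wᴴ = 1` once `d_k = conj (w i k) / conj (w l k)`, which is
defined because the entries of a Hadamard matrix do not vanish. So every matrix unit `e_il` is
itself one of the products `w d wᴴ d'`.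
-/

open Matrix

namespace Matrix

variable {ι K : Type*} [Fintype ι] [DecidableEq ι] [Field K]

theorem span_eq_top_of_single_one_mem {S : Submodule K (Matrix ι ι K)}
    (h : ∀ i j, single i j 1 ∈ S) : S = ⊤ := by
  rw [eq_top_iff, ← (stdBasis K ι ι).span_eq, Submodule.span_le]
  rintro _ ⟨⟨i, j⟩, rfl⟩
  simpa [stdBasis_eq_single] using h i j

theorem mul_diagonal_div_mul_apply {w v : Matrix ι ι K} (hv : ∀ j k, v j k ≠ 0)
    (p i l : ι) : (w * diagonal (fun k ↦ v k i / v k l) * v) p l = (w * v) p i := by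
  rw [mul_apply, mul_apply]
  simp only [mul_diagonal]
  exact Finset.sum_congr rfl fun k _ ↦ by rw [mul_assoc, div_mul_cancel₀ _ (hv k l)]

theorem single_one_eq_mul_diagonal_mul_mul_diagonal {w v : Matrix ι ι K} (hwv : w * v = 1)
    (hv : ∀ j k, v j k ≠ 0) (i l : ι) :
    single i l 1 = w * diagonal (fun k ↦ v k i / v k l) * v * diagonal (Pi.single l 1) := by
  ext p q
  rw [mul_diagonal]
  rcases eq_or_ne q l with rfl | hq
  · rw [Pi.single_eq_same, mul_one, mul_diagonal_div_mul_apply hv, hwv, one_apply, single_apply]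
    simp [eq_comm]
  · rw [Pi.single_eq_of_ne hq, mul_zero]
    exact single_apply_of_col_ne _ _ hq.symm _

theorem span_mul_diagonal_mul_mul_diagonal_eq_top {w v : Matrix ι ι K} (hwv : w * v = 1)
    (hv : ∀ j k, v j k ≠ 0) :
    Submodule.span K {x | ∃ d d' : ι → K, x = w * diagonal d * v * diagonal d'} = ⊤ :=
  span_eq_top_of_single_one_mem fun i l ↦ Submodule.subset_span
    ⟨_, _, single_one_eq_mul_diagonal_mul_mul_diagonal hwv hv i l⟩

end Matrix

/-- For a complex Hadamard matrix `w ∈ M_n(ℂ)` (a unitary all of whose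
entries have modulus `n^(-1/2)`), the linear span of the products `w d w* d'` with
`d, d'` diagonal is all of `M_n(ℂ)`: the spin-model commuting square of `w` is
non-degenerate. -/
theorem spin_model_nondegenerate
    (n : ℕ) (w : Matrix (Fin n) (Fin n) ℂ)
    (hw : w * wᴴ = 1 ∧ wᴴ * w = 1)
    (hmod : ∀ i j : Fin n, ‖w i j‖ = 1 / Real.sqrt n) :
    Submodule.span ℂ
      {x : Matrix (Fin n) (Fin n) ℂ |
        ∃ d d' : Fin n → ℂ,
          x = w * Matrix.diagonal d * wᴴ * Matrix.diagonal d'} = ⊤ := by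
  refine span_mul_diagonal_mul_mul_diagonal_eq_top hw.1 fun j k ↦ ?_
  have hn : (0 : ℝ) < n := by exact_mod_cast j.pos
  rw [conjTranspose_apply, star_ne_zero, ← norm_pos_iff, hmod]
  positivity
end

section
/- Let H be a Hopf algebra over ℂ with comultiplication Δ, counit ε and antipode S, let π : H → M_k(ℂ) be a unital algebra homomorphism, and define ρ : H → M_k(ℂ) ⊗ M_k(ℂ) by ρ(x) = Σ π(x₍₂₎) ⊗ (π(S(x₍₁₎)))ᵀ (Sweedler notation). Assume that the counit ε belongs to the coefficient space C_π, i.e. ε is a linear combination of the functionals x ↦ π(x)_{ij}. Then both C_π and C_{π∘S} are contained in the coefficient space C_ρ of ρ, where C_ρ is the linear span of all functionals x ↦ ρ(x)_{(i,a),(j,b)}. (This is the key step proving that the representation ρ is inner faithful whenever π is inner faithful and contains the counit, used in showing outerness of product type coactions.) -/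
open TensorProduct

/-- The linear functional `x ↦ A(x) i j` picking out the `(i,j)` entry of a
matrix-valued linear map. -/
noncomputable def entryFunctional {H : Type*} [AddCommMonoid H] [Module ℂ H] {m : Type*}
    (τ : H →ₗ[ℂ] Matrix m m ℂ) (i j : m) : H →ₗ[ℂ] ℂ where
  toFun x := τ x i j
  map_add' x y := by simp [Matrix.add_apply]
  map_smul' c x := by simp [Matrix.smul_apply]

/-- The coefficient space `C_τ` of a matrix-valued linear map `τ` : the linear span,
inside the dual space, of the entry functionals `x ↦ τ(x)_{ij}`. -/
noncomputable def coeffSpace {H : Type*} [AddCommMonoid H] [Module ℂ H] {m : Type*}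
    (τ : H →ₗ[ℂ] Matrix m m ℂ) : Submodule ℂ (H →ₗ[ℂ] ℂ) :=
  Submodule.span ℂ (Set.range fun p : m × m => entryFunctional τ p.1 p.2)

/-- The map `ρ(x) = Σ π(x₍₂₎) ⊗ (π(S(x₍₁₎)))ᵀ` (Sweedler notation), with values in
`M_k(ℂ) ⊗ M_k(ℂ) ≅ M_{k²}(ℂ)` realized as matrices indexed by pairs
(Kronecker product). -/
noncomputable def rho {H : Type*} [Ring H] [HopfAlgebra ℂ H] {k : ℕ}
    (π : H →ₐ[ℂ] Matrix (Fin k) (Fin k) ℂ) :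
    H →ₗ[ℂ] Matrix (Fin k × Fin k) (Fin k × Fin k) ℂ :=
  TensorProduct.lift
      ((Matrix.kroneckerBilinear (R := ℂ)).compl₁₂ π.toLinearMap
        ((Matrix.transposeLinearEquiv (Fin k) (Fin k) ℂ ℂ).toLinearMap ∘ₗ
          π.toLinearMap ∘ₗ HopfAlgebra.antipode (R := ℂ)))
    ∘ₗ (TensorProduct.comm ℂ H H).toLinearMap ∘ₗ Coalgebra.comul

lemma counit_antipode_aux {H : Type*} [Ring H] [HopfAlgebra ℂ H] (x : H) :
    (Coalgebra.counit (R := ℂ)) ((HopfAlgebra.antipode (R := ℂ)) x)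
      = (Coalgebra.counit (R := ℂ)) x := by
  set S : H →ₗ[ℂ] H := HopfAlgebra.antipode (R := ℂ)
  set ε : H →ₗ[ℂ] ℂ := Coalgebra.counit (R := ℂ)
  let φ : H ⊗[ℂ] H →ₗ[ℂ] ℂ :=
    TensorProduct.lift ((LinearMap.mul ℂ ℂ).compl₁₂ (ε ∘ₗ S) ε)
  have h1 : ∀ t : H ⊗[ℂ] H,
      φ t = ε (LinearMap.mul' ℂ H (S.rTensor H t)) := by
    intro t
    induction t using TensorProduct.induction_on with
    | zero => simp
    | tmul a b => simp [φ, ε, LinearMap.mul'_apply, Bialgebra.counit_mul]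
    | add t s ht hs => simp [map_add, ht, hs]
  have h2 : ∀ t : H ⊗[ℂ] H,
      φ t = ε (S ((TensorProduct.rid ℂ H) (ε.lTensor H t))) := by
    intro t
    induction t using TensorProduct.induction_on with
    | zero => simp
    | tmul a b => simp [φ, mul_comm]
    | add t s ht hs => simp [map_add, ht, hs]
  have key := (h2 (Coalgebra.comul x)).symm.trans (h1 (Coalgebra.comul x))
  rw [Coalgebra.lTensor_counit_comul] at key
  rw [HopfAlgebra.mul_antipode_rTensor_comul_apply] at key
  simpa [ε, Bialgebra.counit_algebraMap] using key

/-- Let `H` be a Hopf algebra over `ℂ`, `π : H → M_k(ℂ)` a unital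
algebra homomorphism with `ε ∈ C_π`, and `ρ(x) = Σ π(x₍₂₎) ⊗ (π(S(x₍₁₎)))ᵀ`. Then
both `C_π` and `C_{π∘S}` are contained in the coefficient space `C_ρ`. -/
theorem coeffSpaces_le_coeffSpace_rho
    (H : Type*) [Ring H] [HopfAlgebra ℂ H]
    (k : ℕ) (π : H →ₐ[ℂ] Matrix (Fin k) (Fin k) ℂ)
    (hε : (Coalgebra.counit : H →ₗ[ℂ] ℂ) ∈ coeffSpace π.toLinearMap) :
    coeffSpace π.toLinearMap ≤ coeffSpace (rho π) ∧
    coeffSpace (π.toLinearMap ∘ₗ HopfAlgebra.antipode (R := ℂ)) ≤ coeffSpace (rho π) := by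
  classical
  obtain ⟨c, hc⟩ := (Submodule.mem_span_range_iff_exists_fun ℂ).mp hε
  have hc' : ∀ x : H, ∑ p : Fin k × Fin k, c p * π x p.1 p.2
      = Coalgebra.counit (R := ℂ) x := by
    intro x
    have := LinearMap.congr_fun hc x
    simpa [entryFunctional] using this
  set D : H ⊗[ℂ] H →ₗ[ℂ] Matrix (Fin k × Fin k) (Fin k × Fin k) ℂ :=
    TensorProduct.lift
        ((Matrix.kroneckerBilinear (R := ℂ)).compl₁₂ π.toLinearMap
          ((Matrix.transposeLinearEquiv (Fin k) (Fin k) ℂ ℂ).toLinearMap ∘ₗ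
            π.toLinearMap ∘ₗ HopfAlgebra.antipode (R := ℂ)))
      ∘ₗ (TensorProduct.comm ℂ H H).toLinearMap with hDdef
  have hrho : ∀ x : H, rho π x = D (Coalgebra.comul x) := fun x => rfl
  have hDentry : ∀ (a b : H) (i a₁ j b₁ : Fin k),
      D (a ⊗ₜ[ℂ] b) (i, a₁) (j, b₁)
        = π b i j * π (HopfAlgebra.antipode (R := ℂ) a) b₁ a₁ := by
    intro a b i a₁ j b₁
    simp [D, Matrix.kroneckerBilinear, Matrix.kroneckerMap_apply,
      Matrix.transposeLinearEquiv, Matrix.transposeAddEquiv, Matrix.transpose_apply]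
  have claimA : ∀ (i j : Fin k) (t : H ⊗[ℂ] H),
      ∑ p : Fin k × Fin k, c p * D t (i, p.2) (j, p.1)
        = π ((TensorProduct.lid ℂ H) ((Coalgebra.counit (R := ℂ)).rTensor H t)) i j := by
    intro i j t
    induction t using TensorProduct.induction_on with
    | zero => simp
    | tmul a b =>
      have : ∑ p : Fin k × Fin k, c p * D (a ⊗ₜ[ℂ] b) (i, p.2) (j, p.1)
          = π b i j * ∑ p : Fin k × Fin k,
              c p * π (HopfAlgebra.antipode (R := ℂ) a) p.1 p.2 := by
        rw [Finset.mul_sum]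
        exact Finset.sum_congr rfl fun p _ => by rw [hDentry]; ring
      rw [this, hc', counit_antipode_aux]
      simp [LinearMap.rTensor_tmul, TensorProduct.lid_tmul, Matrix.smul_apply,
        smul_eq_mul, mul_comm]
    | add t s ht hs =>
      simp only [map_add, Matrix.add_apply, mul_add, Finset.sum_add_distrib, ht, hs]
  have claimB : ∀ (i j : Fin k) (t : H ⊗[ℂ] H),
      ∑ p : Fin k × Fin k, c p * D t (p.1, j) (p.2, i)
        = π (HopfAlgebra.antipode (R := ℂ)
            ((TensorProduct.rid ℂ H) ((Coalgebra.counit (R := ℂ)).lTensor H t))) i j := by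
    intro i j t
    induction t using TensorProduct.induction_on with
    | zero => simp
    | tmul a b =>
      have : ∑ p : Fin k × Fin k, c p * D (a ⊗ₜ[ℂ] b) (p.1, j) (p.2, i)
          = π (HopfAlgebra.antipode (R := ℂ) a) i j
              * ∑ p : Fin k × Fin k, c p * π b p.1 p.2 := by
        rw [Finset.mul_sum]
        exact Finset.sum_congr rfl fun p _ => by rw [hDentry]; ring
      rw [this, hc']
      simp [LinearMap.lTensor_tmul, TensorProduct.rid_tmul, Matrix.smul_apply,
        smul_eq_mul, mul_comm]
    | add t s ht hs =>
      simp only [map_add, Matrix.add_apply, mul_add, Finset.sum_add_distrib, ht, hs]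
  constructor
  · rw [coeffSpace, Submodule.span_le]
    rintro _ ⟨⟨i, j⟩, rfl⟩
    show entryFunctional π.toLinearMap i j ∈ coeffSpace (rho π)
    have heq : entryFunctional π.toLinearMap i j
        = ∑ p : Fin k × Fin k, c p • entryFunctional (rho π) (i, p.2) (j, p.1) := by
      ext x
      have := claimA i j (Coalgebra.comul x)
      rw [Coalgebra.rTensor_counit_comul] at this
      simpa [entryFunctional, hrho] using this.symm
    rw [heq]
    exact Submodule.sum_mem _ fun p _ => Submodule.smul_mem _ _
      (Submodule.subset_span ⟨((i, p.2), (j, p.1)), rfl⟩)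
  · rw [coeffSpace, Submodule.span_le]
    rintro _ ⟨⟨i, j⟩, rfl⟩
    show entryFunctional (π.toLinearMap ∘ₗ HopfAlgebra.antipode (R := ℂ)) i j ∈ coeffSpace (rho π)
    have heq : entryFunctional (π.toLinearMap ∘ₗ HopfAlgebra.antipode (R := ℂ)) i j
        = ∑ p : Fin k × Fin k, c p • entryFunctional (rho π) (p.1, j) (p.2, i) := by
      ext x
      have := claimB i j (Coalgebra.comul x)
      rw [Coalgebra.lTensor_counit_comul] at this
      simpa [entryFunctional, hrho] using this.symm
    rw [heq]
    exact Submodule.sum_mem _ fun p _ => Submodule.smul_mem _ _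
      (Submodule.subset_span ⟨((p.1, j), (p.2, i)), rfl⟩)
end

section
/- Let B be a finite-dimensional unital C*-algebra with canonical trace τ, defined by τ(x) = Tr(L_x)/dim_ℂ(B) where L_x ∈ End_ℂ(B) is left multiplication by x. Let φ : B → B ⊗ M_k(ℂ) be a unital *-homomorphism satisfying the commuting square condition (τ ⊗ id)(φ(b)) = τ(b)·1_k for all b ∈ B. Write φ(b) = Σ_{ij} φ_{ij}(b) ⊗ E_{ij} with linear maps φ_{ij} : B → B, and let u_φ : B ⊗ ℂ^k → B ⊗ ℂ^k be the linear map u_φ(x ⊗ e_j) = Σ_i φ_{ij}(x) ⊗ e_i. Then u_φ is a bijection and preserves the sesquilinear form ⟨x ⊗ ξ, y ⊗ η⟩ = τ(x*y)·⟨ξ, η⟩ on B ⊗ ℂ^k; that is, u_φ is a unitary element of End_ℂ(B) ⊗ M_k(ℂ) with respect to the Hilbert space structure coming from the canonical trace. -/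
/-!
Since `φ` is a `*`-homomorphism, `Σ_i φ_{ji}(x*) φ_{il}(y) = φ_{jl}(x* y)`, and the commuting
square condition kills the off-diagonal terms after applying `τ`; so `u_φ` preserves the form.
The form is definite because `τ` is faithful on positive elements: `Tr(L_a)` is the sum of the
eigenvalues of `L_a`, which form the spectrum of `a` (a finite-dimensional algebra is
Dedekind-finite), so for `a ≥ 0` it is a sum of nonnegative reals that vanishes only when the
spectrum is `{0}`, i.e. when `a = 0`. An isometry for a definite form is injective, hence
bijective in finite dimensions.
-/

open Matrix

/-- The canonical trace of a finite dimensional `ℂ`-algebra: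
`τ(x) = Tr(L_x) / dim_ℂ(B)`, where `L_x` is left multiplication by `x`. -/
noncomputable def canonicalTrace (B : Type*) [NormedRing B] [NormedAlgebra ℂ B] (x : B) : ℂ :=
  LinearMap.trace ℂ B (LinearMap.mulLeft ℂ x) / (Module.finrank ℂ B : ℂ)

noncomputable def canonicalTraceLinearMap (B : Type*) [NormedRing B] [NormedAlgebra ℂ B] :
    B →ₗ[ℂ] ℂ :=
  (Module.finrank ℂ B : ℂ)⁻¹ • (LinearMap.trace ℂ B ∘ₗ LinearMap.mul ℂ B)

theorem canonicalTraceLinearMap_apply {B : Type*} [NormedRing B] [NormedAlgebra ℂ B] (x : B) :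
    canonicalTraceLinearMap B x = canonicalTrace B x :=
  inv_mul_eq_div _ _

section MatrixCoeffMulVec

variable {R B n : Type*} [CommSemiring R] [Semiring B] [Algebra R B] [Star B] [Fintype n]
  [DecidableEq n]

/-- `u_φ`: the matrix `(φ_{ij})` of coefficient maps of `φ` acting on column vectors. -/
noncomputable def matrixCoeffMulVec (φ : B →⋆ₐ[R] Matrix n n B) : (n → B) →ₗ[R] (n → B) :=
  LinearMap.pi fun i => ∑ j, entryLinearMap R B i j ∘ₗ φ.toLinearMap ∘ₗ LinearMap.proj j

theorem matrixCoeffMulVec_apply (φ : B →⋆ₐ[R] Matrix n n B) (f : n → B) (i : n) :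
    matrixCoeffMulVec φ f i = ∑ j, φ (f j) i j := by
  simp [matrixCoeffMulVec]

end MatrixCoeffMulVec

theorem sum_map_star_mul_sum_entries {n B M F G : Type*} [Fintype n] [DecidableEq n]
    [NonUnitalSemiring B] [StarRing B] [AddCommMonoid M]
    [FunLike F B (Matrix n n B)] [MulHomClass F B (Matrix n n B)] [StarHomClass F B (Matrix n n B)]
    [FunLike G B M] [AddMonoidHomClass G B M] (φ : F) (T : G)
    (hT : ∀ b i j, T (φ b i j) = if i = j then T b else 0) (f g : n → B) :
    ∑ i, T (star (∑ j, φ (f j) i j) * ∑ l, φ (g l) i l) = ∑ i, T (star (f i) * g i) :=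
  calc ∑ i, T (star (∑ j, φ (f j) i j) * ∑ l, φ (g l) i l)
      = ∑ i, ∑ j, ∑ l, T (φ (star (f j)) j i * φ (g l) i l) := by
        simp only [star_sum, Finset.sum_mul_sum, map_sum, map_star, star_apply]
    _ = ∑ j, ∑ l, ∑ i, T (φ (star (f j)) j i * φ (g l) i l) := by
        rw [Finset.sum_comm]
        exact Finset.sum_congr rfl fun _ _ => Finset.sum_comm
    _ = ∑ j, ∑ l, T (φ (star (f j) * g l) j l) := by
        simp only [map_mul, mul_apply, map_sum]
    _ = ∑ i, T (star (f i) * g i) := by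
        simp only [hT, Finset.sum_ite_eq, Finset.mem_univ, if_true]

theorem spectrum_mulLeft {R A : Type*} [CommRing R] [Ring A] [Algebra R A]
    [IsDedekindFiniteMonoid A] (a : A) :
    spectrum R (LinearMap.mulLeft R a) = spectrum R a := by
  refine subset_antisymm (AlgHom.spectrum_apply_subset (Algebra.lmul R A) a) fun r hr hL => hr ?_
  obtain ⟨y, hy⟩ := ((Module.End.isUnit_iff _).mp hL).surjective 1
  have hy' : (algebraMap R A r - a) * y = 1 := by
    simpa [Algebra.algebraMap_eq_smul_one, sub_mul] using hy
  exact ⟨⟨_, y, hy', mul_eq_one_comm.mp hy'⟩, rfl⟩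

theorem mem_roots_charpoly_mulLeft_iff {K A : Type*} [Field K] [Ring A] [Algebra K A]
    [FiniteDimensional K A] {a : A} {z : K} :
    z ∈ (LinearMap.mulLeft K a).charpoly.roots ↔ z ∈ spectrum K a := by
  have : IsArtinianRing A := IsArtinianRing.of_finite K A
  rw [← spectrum_mulLeft, Module.End.mem_spectrum_iff_isRoot_charpoly,
    Polynomial.mem_roots (LinearMap.charpoly_monic _).ne_zero]

section Positivity

open ComplexOrder

variable {A : Type*} [CStarAlgebra A] [PartialOrder A] [StarOrderedRing A] [FiniteDimensional ℂ A]
  {a : A}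

theorem nonneg_of_mem_roots_charpoly_mulLeft (ha : 0 ≤ a) :
    ∀ z ∈ (LinearMap.mulLeft ℂ a).charpoly.roots, 0 ≤ z := fun _ hz =>
  spectrum_nonneg_of_nonneg ha (mem_roots_charpoly_mulLeft_iff.mp hz)

theorem trace_mulLeft_nonneg (ha : 0 ≤ a) : 0 ≤ LinearMap.trace ℂ A (LinearMap.mulLeft ℂ a) := by
  rw [Module.End.trace_eq_sum_roots_charpoly_of_splits (IsAlgClosed.splits _)]
  exact Multiset.sum_nonneg (nonneg_of_mem_roots_charpoly_mulLeft ha)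

theorem trace_mulLeft_eq_zero_iff (ha : 0 ≤ a) :
    LinearMap.trace ℂ A (LinearMap.mulLeft ℂ a) = 0 ↔ a = 0 := by
  refine ⟨fun h => CFC.eq_zero_of_spectrum_subset_zero (R := ℂ) a fun z hz => ?_, ?_⟩
  · rw [Module.End.trace_eq_sum_roots_charpoly_of_splits (IsAlgClosed.splits _)] at h
    have hz' := mem_roots_charpoly_mulLeft_iff.mpr hz
    exact le_antisymm
      (h ▸ Multiset.single_le_sum (nonneg_of_mem_roots_charpoly_mulLeft ha) z hz')
      (nonneg_of_mem_roots_charpoly_mulLeft ha z hz')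
  · rintro rfl
    simp

theorem canonicalTrace_nonneg (ha : 0 ≤ a) : 0 ≤ canonicalTrace A a :=
  div_nonneg (trace_mulLeft_nonneg ha) (Nat.cast_nonneg _)

theorem canonicalTrace_eq_zero_iff (ha : 0 ≤ a) : canonicalTrace A a = 0 ↔ a = 0 := by
  rw [canonicalTrace, div_eq_zero_iff, trace_mulLeft_eq_zero_iff ha, Nat.cast_eq_zero,
    Module.finrank_zero_iff]
  exact or_iff_left_of_imp fun _ => Subsingleton.elim _ _

end Positivity

open ComplexOrder in
theorem sum_canonicalTrace_star_mul_self_eq_zero_iff {B ι : Type*} [NormedRing B] [StarRing B]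
    [CStarRing B] [NormedAlgebra ℂ B] [StarModule ℂ B] [FiniteDimensional ℂ B] [Fintype ι]
    {f : ι → B} : ∑ i, canonicalTrace B (star (f i) * f i) = 0 ↔ f = 0 := by
  let _ : CStarAlgebra B := { toCompleteSpace := FiniteDimensional.complete ℂ B }
  let _ := CStarAlgebra.spectralOrder B
  have _ := CStarAlgebra.spectralOrderedRing B
  rw [Finset.sum_eq_zero_iff_of_nonneg fun i _ => canonicalTrace_nonneg (star_mul_self_nonneg _)]
  simp only [Finset.mem_univ, true_imp_iff, funext_iff, Pi.zero_apply,
    fun i => canonicalTrace_eq_zero_iff (star_mul_self_nonneg (f i)),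
    CStarRing.star_mul_self_eq_zero_iff]

/-- Let `B` be a finite dimensional unital C*-algebra with canonical
trace `τ` and let `φ : B → B ⊗ M_k(ℂ)` (realized as `M_k(B)`) be a unital
`*`-homomorphism satisfying the commuting square condition
`(τ ⊗ id)(φ(b)) = τ(b)·1_k`. Then the associated linear map
`u_φ : B ⊗ ℂ^k → B ⊗ ℂ^k`, `(u_φ f) i = Σ_j φ_{ij}(f j)`, is a bijection preserving
the sesquilinear form `⟨f, g⟩ = Σ_i τ((f i)* g i)`; i.e. `u_φ` is a unitary element
of `End_ℂ(B) ⊗ M_k(ℂ)` for the Hilbert structure of the canonical trace. -/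
theorem u_phi_is_unitary
    (B : Type*) [NormedRing B] [StarRing B] [CStarRing B]
    [NormedAlgebra ℂ B] [StarModule ℂ B] [FiniteDimensional ℂ B]
    (k : ℕ) (φ : B →⋆ₐ[ℂ] Matrix (Fin k) (Fin k) B)
    -- the commuting square condition `(τ ⊗ id)(φ(b)) = τ(b)·1_k`
    (hcs : ∀ b : B, ∀ i j : Fin k,
        canonicalTrace B (φ b i j) = canonicalTrace B b * (if i = j then 1 else 0))
    (uφ : (Fin k → B) → (Fin k → B))
    (huφ : ∀ (f : Fin k → B) (i : Fin k), uφ f i = ∑ j, φ (f j) i j) :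
    Function.Bijective uφ ∧
    ∀ f g : Fin k → B,
      ∑ i, canonicalTrace B (star (uφ f i) * uφ g i)
        = ∑ i, canonicalTrace B (star (f i) * g i) := by
  have hτ : ∀ b i j, canonicalTraceLinearMap B (φ b i j) =
      if i = j then canonicalTraceLinearMap B b else 0 := by
    simpa only [canonicalTraceLinearMap_apply, mul_ite, mul_one, mul_zero] using hcs
  have hpres : ∀ f g : Fin k → B, ∑ i, canonicalTrace B (star (uφ f i) * uφ g i)
      = ∑ i, canonicalTrace B (star (f i) * g i) := fun f g => by
    simpa only [huφ, canonicalTraceLinearMap_apply] using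
      sum_map_star_mul_sum_entries φ (canonicalTraceLinearMap B) hτ f g
  obtain rfl : uφ = matrixCoeffMulVec φ :=
    funext fun f => funext fun i => (huφ f i).trans (matrixCoeffMulVec_apply φ f i).symm
  have hinj : Function.Injective (matrixCoeffMulVec φ) := by
    refine (injective_iff_map_eq_zero _).mpr fun f hf => ?_
    rw [← sum_canonicalTrace_star_mul_self_eq_zero_iff, ← hpres, hf]
    simp only [Pi.zero_apply, star_zero, zero_mul, ← canonicalTraceLinearMap_apply, map_zero,
      Finset.sum_const_zero]
  exact ⟨⟨hinj, LinearMap.injective_iff_surjective.mp hinj⟩, hpres⟩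
end
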